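/- arXiv:1308.4715 — 2 statements merged into one kernel-verified Lean document; each statement's English description precedes it below -/
import Mathlib

section
/- Let G be a connected graph on n ≥ 2 vertices and let r be any vertex of G. There exist two cop walks w₁, w₂ on G with w₁(0) = w₂(0) = r (a repeated depth-first-search traversal with a pause at each leaf, run forward or backward) such that for every gamble p on V(G), the average (E[T_{w₁}] + E[T_{w₂}])/2 of the expected capture times is at most 3n/(1 − e^{−2}) − 3n/2, which is less than 2n. (Lemma 4.4: the cop vs. unknown gambler game has expected capture time less than 2n on any connected n-vertex graph.) -/
open MeasureTheory ProbabilityTheory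
open scoped ENNReal

/-- A cop walk on a graph `G`: at every time step the cop stays put or moves
along an edge of `G`. -/
def IsCopWalk {V : Type*} (G : SimpleGraph V) (w : ℕ → V) : Prop :=
  ∀ t : ℕ, w (t + 1) = w t ∨ G.Adj (w t) (w (t + 1))

/-- The capture time `T_w = inf {t ≥ 1 : w t = X t ω}` of the walk `w` against the
gambler positions `X`, valued in `[0, ∞]` (it is `∞` if no such `t` exists). -/
noncomputable def captureTime {V Ω : Type*} (w : ℕ → V) (X : ℕ → Ω → V) (ω : Ω) : ℝ≥0∞ :=
  sInf {r : ℝ≥0∞ | ∃ t : ℕ, 1 ≤ t ∧ w t = X t ω ∧ r = t}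

/-- `X` is an i.i.d. sequence of `V`-valued random variables, each with law `p`. -/
def IsIIDWithLaw {V Ω : Type*} [MeasurableSpace V] [MeasurableSpace Ω]
    (μ : Measure Ω) (p : PMF V) (X : ℕ → Ω → V) : Prop :=
  iIndepFun X μ ∧
    ∀ t : ℕ, Measurable (X t) ∧ μ.map (X t) = p.toMeasure

namespace CopGambler

section TourSec


variable {V : Type*} (G : SimpleGraph V)

/-- Step relation for a cop walk. -/
def Rel (a b : V) : Prop := b = a ∨ G.Adj a b

lemma rel_refl (a : V) : Rel G a a := Or.inl rfl

lemma rel_symm {a b : V} (h : Rel G a b) : Rel G b a :=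
  h.elim (fun e => Or.inl e.symm) (fun e => Or.inr e.symm)

lemma exists_cross {S : Set V} {a b : V} (w : G.Walk a b) (ha : a ∈ S) (hb : b ∉ S) :
    ∃ u v, u ∈ S ∧ v ∉ S ∧ G.Adj u v := by
  classical
  induction w with
  | nil => exact absurd ha hb
  | @cons x y z hadj p ih =>
    by_cases hy : y ∈ S
    · exact ih hy hb
    · exact ⟨x, y, ha, hy, hadj⟩

variable [DecidableEq V]

/-- A closed walk list on vertex set `S` based at `r` with enough repetitions. -/
def IsTour (r : V) (S : Finset V) (l : List V) : Prop :=
  l.Chain' (Rel G) ∧ l.head? = some r ∧ l.getLast? = some r ∧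
  l.length = 3 * S.card + 1 ∧ 4 ≤ l.count r ∧
  (∀ v ∈ S, 2 ≤ l.count v) ∧ (∀ v ∈ l, v ∈ S)

lemma isTour_base (r : V) : IsTour G r ({r} : Finset V) ([r, r, r, r] : List V) := by
  refine ⟨?_, rfl, rfl, by simp, by simp, ?_, by simp⟩
  · simp [List.Chain', List.isChain_cons_cons, rel_refl]
  · intro v hv; simp at hv; subst hv; simp

lemma IsTour.extend {r u v : V} {S : Finset V} {l : List V} (h : IsTour G r S l)
    (hu : u ∈ S) (hv : v ∉ S) (huv : G.Adj u v) :
    ∃ l', IsTour G r (insert v S) l' := by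
  obtain ⟨hch, hhd, hlast, hlen, hcr, hcS, hmem⟩ := h
  have humem : u ∈ l := List.count_pos_iff.mp (by have := hcS u hu; omega)
  obtain ⟨s, t, rfl⟩ := List.append_of_mem humem
  have hcnt : ∀ x : V, (s ++ u :: v :: v :: u :: t).count x
      = (s ++ u :: t).count x + 2 * (if v = x then 1 else 0) + (if u = x then 1 else 0) := by
    intro x
    simp only [List.count_append, List.count_cons, beq_iff_eq]
    split_ifs <;> omega
  refine ⟨s ++ u :: v :: v :: u :: t, ?_, ?_, ?_, ?_, ?_, ?_, ?_⟩
  · simp only [List.Chain', List.isChain_append] at hch ⊢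
    obtain ⟨h1, h2, h3⟩ := hch
    refine ⟨h1, ?_, by simpa using h3⟩
    rw [List.isChain_cons_cons, List.isChain_cons_cons, List.isChain_cons_cons]
    exact ⟨Or.inr huv, rel_refl G v, rel_symm G (Or.inr huv), h2⟩
  · cases s with
    | nil => simpa using hhd
    | cons a s' =>
      rw [List.head?_append_of_ne_nil _ (by simp)] at hhd ⊢
      exact hhd
  · cases t with
    | nil =>
      rw [show s ++ [u, v, v, u] = (s ++ [u, v, v]) ++ [u] by simp,
        List.getLast?_append_cons]
      rw [List.getLast?_append_cons] at hlast
      simpa using hlast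
    | cons b t' =>
      rw [show s ++ u :: v :: v :: u :: b :: t' = (s ++ [u, v, v, u]) ++ b :: t' by simp,
        List.getLast?_append_cons]
      rwa [show s ++ u :: b :: t' = (s ++ [u]) ++ b :: t' by simp,
        List.getLast?_append_cons] at hlast
  · rw [Finset.card_insert_of_notMem hv]
    simp only [List.length_append, List.length_cons] at hlen ⊢
    omega
  · have := hcnt r; split_ifs at this <;> omega
  · intro x hx
    rcases Finset.mem_insert.mp hx with rfl | hxS
    · have h1 := hcnt x
      rw [if_pos rfl] at h1
      split_ifs at h1 <;> omega
    · have h2 := hcS x hxS; have := hcnt x; split_ifs at this <;> omega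
  · intro x hx
    simp only [List.mem_append, List.mem_cons] at hx
    rcases hx with hx | hx
    · exact Finset.mem_insert_of_mem (hmem x (by simp [hx]))
    · rcases hx with rfl | rfl | rfl | rfl | hx
      · exact Finset.mem_insert_of_mem hu
      · exact Finset.mem_insert_self _ _
      · exact Finset.mem_insert_self _ _
      · exact Finset.mem_insert_of_mem hu
      · exact Finset.mem_insert_of_mem (hmem x (by simp [hx]))

variable [Fintype V]

lemma exists_tour (hG : G.Connected) (r : V) :
    ∃ l : List V, IsTour G r Finset.univ l := by
  classical
  suffices h : ∀ (k : ℕ) (S : Finset V) (l : List V), (Finset.univ \ S).card = k →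
      IsTour G r S l → ∃ l', IsTour G r Finset.univ l' by
    exact h _ ({r} : Finset V) ([r, r, r, r] : List V) rfl (isTour_base G r)
  intro k
  induction k with
  | zero =>
    intro S l hk ht
    have he : Finset.univ \ S = ∅ := Finset.card_eq_zero.mp hk
    have hsub : Finset.univ ⊆ S := by
      intro x _
      by_contra hx
      have hxx : x ∈ Finset.univ \ S := Finset.mem_sdiff.mpr ⟨Finset.mem_univ _, hx⟩
      rw [he] at hxx
      exact absurd hxx (Finset.notMem_empty x)
    exact ⟨l, (Finset.univ_subset_iff.mp hsub) ▸ ht⟩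
  | succ k ih =>
    intro S l hk ht
    have hne : (Finset.univ \ S).Nonempty := by
      rw [← Finset.card_pos, hk]; omega
    obtain ⟨w, hw⟩ := hne
    have hwS : w ∉ S := (Finset.mem_sdiff.mp hw).2
    have hrS : r ∈ S := by
      obtain ⟨_, _, _, _, hcr, _, hmem⟩ := ht
      exact hmem r (List.count_pos_iff.mp (by omega))
    obtain ⟨wlk⟩ := hG.preconnected r w
    obtain ⟨u, v, hu, hv, huv⟩ := exists_cross G wlk hrS hwS
    obtain ⟨l', ht'⟩ := ht.extend G hu hv huv
    refine ih (insert v S) l' ?_ ht'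
    have : Finset.univ \ insert v S = (Finset.univ \ S).erase v := by
      ext x; simp [Finset.mem_sdiff, and_comm, eq_comm]
      try tauto
    rw [this, Finset.card_erase_of_mem (Finset.mem_sdiff.mpr ⟨Finset.mem_univ _, hv⟩), hk]
    omega


end TourSec

section ProbSec


/-- Any `x : ℝ≥0∞` is at most the number of naturals below it. -/
lemma le_tsum_indicator (x : ℝ≥0∞) :
    x ≤ ∑' t : ℕ, (if (t : ℝ≥0∞) < x then (1 : ℝ≥0∞) else 0) := by
  rcases eq_or_ne x ⊤ with rfl | hx
  · have h1 : ∀ t : ℕ, (if (t : ℝ≥0∞) < ⊤ then (1 : ℝ≥0∞) else 0) = 1 := fun t =>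
      if_pos (ENNReal.natCast_lt_top t)
    simp only [h1]
    rw [ENNReal.tsum_const_eq_top_of_ne_zero one_ne_zero]
  · set k := ⌈x.toReal⌉₊ with hk
    have h1 : x ≤ (k : ℝ≥0∞) := by
      rw [← ENNReal.ofReal_toReal hx]
      exact le_trans (ENNReal.ofReal_le_ofReal (Nat.le_ceil _))
        (le_of_eq (ENNReal.ofReal_natCast _))
    refine h1.trans ?_
    have h2 : (k : ℝ≥0∞) = ∑ t ∈ Finset.range k, (if (t : ℝ≥0∞) < x then (1:ℝ≥0∞) else 0) := by
      rw [Finset.sum_congr rfl (fun t ht => ?_), Finset.sum_const, Finset.card_range,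
        nsmul_eq_mul, mul_one]
      rw [if_pos]
      have htk : t < k := Finset.mem_range.mp ht
      have : (t : ℝ) < x.toReal := Nat.lt_ceil.mp htk
      calc (t : ℝ≥0∞) = ENNReal.ofReal t := by simp [ENNReal.ofReal_natCast]
        _ < ENNReal.ofReal x.toReal := by
            exact (ENNReal.ofReal_lt_ofReal_iff (lt_of_le_of_lt (Nat.cast_nonneg t) this)).mpr this
        _ = x := ENNReal.ofReal_toReal hx
    rw [h2]
    exact ENNReal.sum_le_tsum _


variable {V Ω : Type*} [MeasurableSpace V] [DiscreteMeasurableSpace V] [MeasurableSpace Ω]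
  {μ : Measure Ω} [IsProbabilityMeasure μ] {p : PMF V} {X : ℕ → Ω → V}

lemma event_eq (hX : IsIIDWithLaw μ p X) (w : ℕ → V) (t : ℕ) :
    {ω | (t : ℝ≥0∞) < captureTime w X ω}
      = ⋂ s ∈ Finset.Icc 1 t, X s ⁻¹' {w s}ᶜ := by
  ext ω
  simp only [Set.mem_setOf_eq, Set.mem_iInter, Set.mem_preimage, Set.mem_compl_iff,
    Set.mem_singleton_iff, Finset.mem_Icc]
  constructor
  · intro h s hs heq
    have hmem : (s : ℝ≥0∞) ∈ {r : ℝ≥0∞ | ∃ t : ℕ, 1 ≤ t ∧ w t = X t ω ∧ r = t} :=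
      ⟨s, hs.1, heq.symm, rfl⟩
    have := sInf_le hmem
    have hle : (s : ℝ≥0∞) ≤ (t : ℝ≥0∞) := Nat.cast_le.mpr hs.2
    exact absurd (lt_of_lt_of_le h (this.trans hle)) (lt_irrefl _)
  · intro h
    have hge : ((t : ℝ≥0∞) + 1) ≤ captureTime w X ω := by
      apply le_sInf
      rintro y ⟨s, hs1, hws, rfl⟩
      have hst : t < s := by
        by_contra hc
        push_neg at hc
        exact h s ⟨hs1, hc⟩ hws.symm
      calc (t : ℝ≥0∞) + 1 = ((t + 1 : ℕ) : ℝ≥0∞) := by push_cast; ring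
        _ ≤ (s : ℝ≥0∞) := Nat.cast_le.mpr hst
    exact lt_of_lt_of_le (ENNReal.lt_add_right (ENNReal.natCast_ne_top t) one_ne_zero) hge

lemma event_measurable (hX : IsIIDWithLaw μ p X) (w : ℕ → V) (t : ℕ) :
    MeasurableSet {ω | (t : ℝ≥0∞) < captureTime w X ω} := by
  rw [event_eq hX w t]
  exact Finset.measurableSet_biInter _ fun s _ =>
    (hX.2 s).1 (measurableSet_singleton (w s)).compl

lemma measure_event (hX : IsIIDWithLaw μ p X) (w : ℕ → V) (t : ℕ) :
    μ {ω | (t : ℝ≥0∞) < captureTime w X ω}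
      = ∏ s ∈ Finset.Icc 1 t, (1 - p (w s)) := by
  rw [event_eq hX w t,
    hX.1.measure_inter_preimage_eq_mul (Finset.Icc 1 t)
      (sets := fun s => {w s}ᶜ) (fun s _ => (measurableSet_singleton (w s)).compl)]
  refine Finset.prod_congr rfl fun s _ => ?_
  rw [← Measure.map_apply (hX.2 s).1 (measurableSet_singleton (w s)).compl, (hX.2 s).2]
  rw [prob_compl_eq_one_sub (measurableSet_singleton (w s)),
    PMF.toMeasure_apply_singleton p (w s) (measurableSet_singleton (w s))]

lemma lintegral_captureTime_le (hX : IsIIDWithLaw μ p X) (w : ℕ → V) :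
    ∫⁻ ω, captureTime w X ω ∂μ
      ≤ ∑' t : ℕ, ∏ s ∈ Finset.Icc 1 t, (1 - p (w s)) := by
  have hpt : ∀ ω, captureTime w X ω
      ≤ ∑' t : ℕ, ({ω' | (t : ℝ≥0∞) < captureTime w X ω'}.indicator (fun _ => (1:ℝ≥0∞)) ω) := by
    intro ω
    refine (le_tsum_indicator (captureTime w X ω)).trans (le_of_eq (tsum_congr fun t => ?_))
    rw [Set.indicator_apply]
    by_cases h : (t : ℝ≥0∞) < captureTime w X ω
    · rw [if_pos h, if_pos (show ω ∈ {ω' | (t : ℝ≥0∞) < captureTime w X ω'} from h)]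
    · rw [if_neg h, if_neg (show ω ∉ {ω' | (t : ℝ≥0∞) < captureTime w X ω'} from h)]
  calc ∫⁻ ω, captureTime w X ω ∂μ
      ≤ ∫⁻ ω, ∑' t : ℕ, ({ω' | (t : ℝ≥0∞) < captureTime w X ω'}.indicator
          (fun _ => (1:ℝ≥0∞)) ω) ∂μ := lintegral_mono hpt
    _ = ∑' t : ℕ, ∫⁻ ω, ({ω' | (t : ℝ≥0∞) < captureTime w X ω'}.indicator
          (fun _ => (1:ℝ≥0∞)) ω) ∂μ :=
        lintegral_tsum fun t => (measurable_const.indicator (event_measurable hX w t)).aemeasurable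
    _ = ∑' t : ℕ, μ {ω' | (t : ℝ≥0∞) < captureTime w X ω'} := by
        refine tsum_congr fun t => ?_
        rw [lintegral_indicator (event_measurable hX w t), setLIntegral_one]
    _ = ∑' t : ℕ, ∏ s ∈ Finset.Icc 1 t, (1 - p (w s)) :=
        tsum_congr fun t => measure_event hX w t


end ProbSec

section SeriesSec


lemma prod_shift (m : ℕ) (D : ℕ → ℝ≥0∞) (hD : ∀ s, D (s + m) = D s) (t : ℕ) :
    ∏ s ∈ Finset.Ioc 0 (m + t), D s
      = (∏ s ∈ Finset.Ioc 0 m, D s) * ∏ s ∈ Finset.Ioc 0 t, D s := by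
  rw [← Finset.prod_Ioc_consecutive D (Nat.zero_le m) (Nat.le_add_right m t)]
  congr 1
  have hmap : Finset.Ioc m (m + t) = Finset.map (addLeftEmbedding m) (Finset.Ioc 0 t) := by
    rw [Finset.map_add_left_Ioc, add_zero]
  rw [hmap, Finset.prod_map]
  refine Finset.prod_congr rfl fun s _ => ?_
  simp only [addLeftEmbedding_apply]
  rw [add_comm, hD]

lemma prod_period (m : ℕ) (D : ℕ → ℝ≥0∞) (hD : ∀ s, D (s + m) = D s) (j u : ℕ) :
    ∏ s ∈ Finset.Ioc 0 (j * m + u), D s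
      = (∏ s ∈ Finset.Ioc 0 m, D s) ^ j * ∏ s ∈ Finset.Ioc 0 u, D s := by
  induction j with
  | zero => simp
  | succ j ih =>
    have : (j + 1) * m + u = m + (j * m + u) := by ring
    rw [this, prod_shift m D hD, ih, pow_succ]
    ring

lemma tsum_periodic (m : ℕ) (hm : m ≠ 0) (D : ℕ → ℝ≥0∞) (hD : ∀ s, D (s + m) = D s) :
    ∑' t : ℕ, ∏ s ∈ Finset.Ioc 0 t, D s
      = (∑ u ∈ Finset.range m, ∏ s ∈ Finset.Ioc 0 u, D s)
        * (1 - ∏ s ∈ Finset.Ioc 0 m, D s)⁻¹ := by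
  haveI : NeZero m := ⟨hm⟩
  set A : ℕ → ℝ≥0∞ := fun t => ∏ s ∈ Finset.Ioc 0 t, D s with hA
  have h1 : ∑' t : ℕ, A t = ∑' q : ℕ × Fin m, A ((Nat.divModEquiv m).symm q) :=
    ((Nat.divModEquiv m).symm.tsum_eq A).symm
  rw [h1]
  have h2 : ∀ q : ℕ × Fin m, A ((Nat.divModEquiv m).symm q) = (A m) ^ q.1 * A q.2 := by
    intro q
    rw [Nat.divModEquiv_symm_apply]
    exact prod_period m D hD q.1 q.2
  calc ∑' q : ℕ × Fin m, A ((Nat.divModEquiv m).symm q)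
      = ∑' q : ℕ × Fin m, (A m) ^ q.1 * A q.2 := tsum_congr h2
    _ = ∑' (j : ℕ) (u : Fin m), (A m) ^ j * A u :=
        ENNReal.tsum_prod (f := fun (j : ℕ) (u : Fin m) => (A m) ^ j * A (u : ℕ))
    _ = (∑' j : ℕ, (A m) ^ j) * ∑ u ∈ Finset.range m, A u := by
        rw [tsum_congr fun j => ENNReal.tsum_mul_left (a := (A m) ^ j) (f := fun u : Fin m => A u),
          ENNReal.tsum_mul_right]
        congr 1
        rw [tsum_fintype]
        exact Fin.sum_univ_eq_sum_range A m
    _ = (∑ u ∈ Finset.range m, A u) * (1 - A m)⁻¹ := by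
        rw [ENNReal.tsum_geometric, mul_comm]

lemma add_le_one_add_mul {x y : ℝ≥0∞} (hx : x ≤ 1) (hy : y ≤ 1) : x + y ≤ 1 + x * y := by
  have h1 : (1 - y) + y = 1 := tsub_add_cancel_of_le hy
  have h2 : x = x * y + x * (1 - y) := by
    rw [← mul_add, add_comm y (1 - y), h1, mul_one]
  calc x + y = x * y + (x * (1 - y) + y) := by rw [← add_assoc, ← h2]
    _ ≤ x * y + ((1 - y) + y) := by
        refine add_le_add_right (add_le_add_left ?_ y) _
        calc x * (1 - y) ≤ 1 * (1 - y) := mul_le_mul_left hx _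
          _ = 1 - y := one_mul _
    _ = x * y + 1 := by rw [h1]
    _ = 1 + x * y := add_comm _ _

lemma pairing_bound (m : ℕ) (hm : 1 ≤ m) (d : ℕ → ℝ≥0∞) (hd : ∀ t, d t ≤ 1) :
    (∑ u ∈ Finset.range m, ∏ s ∈ Finset.Ioc 0 u, d s)
      + (∑ u ∈ Finset.range m, ∏ s ∈ Finset.Ioc 0 u, d (m - s))
    ≤ m * (1 + ∏ s ∈ Finset.Ioc 0 (m - 1), d s) := by
  set F : ℕ → ℝ≥0∞ := fun u => ∏ s ∈ Finset.Ioc 0 u, d s with hF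
  set B : ℕ → ℝ≥0∞ := fun u => ∏ s ∈ Finset.Ioc 0 u, d (m - s) with hB
  have hrefl : ∑ u ∈ Finset.range m, B u = ∑ u ∈ Finset.range m, B (m - 1 - u) :=
    (Finset.sum_range_reflect B m).symm
  have hkey : ∀ u ∈ Finset.range m, F u * B (m - 1 - u) = F (m - 1) := by
    intro u hu
    have hum : u < m := Finset.mem_range.mp hu
    have hBeq : B (m - 1 - u) = ∏ t ∈ Finset.Ioc u (m - 1), d t := by
      refine Finset.prod_nbij' (fun s => m - s) (fun t => m - t) ?_ ?_ ?_ ?_ ?_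
      · intro a ha
        simp only [Finset.mem_Ioc] at ha ⊢
        omega
      · intro a ha
        simp only [Finset.mem_Ioc] at ha ⊢
        omega
      · intro a ha
        simp only [Finset.mem_Ioc] at ha
        omega
      · intro a ha
        simp only [Finset.mem_Ioc] at ha
        omega
      · intro a ha
        rfl
    rw [hBeq, hF]
    exact Finset.prod_Ioc_consecutive d (Nat.zero_le u) (by omega)
  have hF1 : ∀ u, F u ≤ 1 :=
    fun u => Finset.prod_le_one (fun i _ => zero_le) (fun i _ => hd i)
  have hB1 : ∀ u, B u ≤ 1 :=
    fun u => Finset.prod_le_one (fun i _ => zero_le) (fun i _ => hd _)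
  calc (∑ u ∈ Finset.range m, F u) + (∑ u ∈ Finset.range m, B u)
      = ∑ u ∈ Finset.range m, (F u + B (m - 1 - u)) := by
        rw [hrefl, ← Finset.sum_add_distrib]
    _ ≤ ∑ u ∈ Finset.range m, (1 + F (m - 1)) := by
        refine Finset.sum_le_sum fun u hu => ?_
        calc F u + B (m - 1 - u) ≤ 1 + F u * B (m - 1 - u) :=
              add_le_one_add_mul (hF1 u) (hB1 _)
          _ = 1 + F (m - 1) := by rw [hkey u hu]
    _ = m * (1 + F (m - 1)) := by
        rw [Finset.sum_const, Finset.card_range, nsmul_eq_mul]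


end SeriesSec

section CountSec


lemma count_eq_card_filter {V : Type*} [DecidableEq V] (l : List V) (v d : V) :
    ((Finset.range l.length).filter (fun t => l.getD t d = v)).card = l.count v := by
  induction l with
  | nil => simp
  | cons a l ih =>
    rw [Finset.card_filter] at ih ⊢
    rw [List.length_cons, Finset.sum_range_succ']
    simp only [List.getD_cons_succ, List.getD_cons_zero]
    rw [ih, List.count_cons]
    simp only [beq_iff_eq]
    try rfl
    try (by_cases hav : a = v
         · rw [if_pos hav, if_pos hav.symm]
         · rw [if_neg hav, if_neg (Ne.symm hav)])

lemma tour_filter_card {V : Type*} [DecidableEq V] (l : List V) (r : V) (m : ℕ)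
    (hm1 : 1 ≤ m) (hlen : l.length = m + 1) (h0 : l.getD 0 r = r) (hm : l.getD m r = r)
    (hcr : 4 ≤ l.count r) (hc : ∀ v, v ≠ r → 2 ≤ l.count v) (v : V) :
    2 ≤ ((Finset.Icc 1 (m - 1)).filter (fun t => l.getD t r = v)).card := by
  have hbase := count_eq_card_filter l v r
  rw [hlen] at hbase
  by_cases hv : v = r
  · have hcr' : 4 ≤ l.count v := by rw [hv]; exact hcr
    have hsub : (Finset.range (m + 1)).filter (fun t => l.getD t r = v)
        ⊆ ((Finset.Icc 1 (m - 1)).filter (fun t => l.getD t r = v)) ∪ {0, m} := by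
      intro t ht
      simp only [Finset.mem_filter, Finset.mem_range] at ht
      simp only [Finset.mem_union, Finset.mem_filter, Finset.mem_Icc, Finset.mem_insert,
        Finset.mem_singleton]
      by_cases h0t : t = 0
      · right; left; exact h0t
      · by_cases hmt : t = m
        · right; right; exact hmt
        · left; exact ⟨⟨by omega, by omega⟩, ht.2⟩
    have hcard := Finset.card_le_card hsub
    have hcard2 : (({0, m} : Finset ℕ)).card ≤ 2 := Finset.card_insert_le _ _ |>.trans (by simp)
    have := Finset.card_union_le ((Finset.Icc 1 (m - 1)).filter (fun t => l.getD t r = v))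
      ({0, m} : Finset ℕ)
    omega
  · have hsub : (Finset.range (m + 1)).filter (fun t => l.getD t r = v)
        ⊆ ((Finset.Icc 1 (m - 1)).filter (fun t => l.getD t r = v)) := by
      intro t ht
      simp only [Finset.mem_filter, Finset.mem_range] at ht
      simp only [Finset.mem_filter, Finset.mem_Icc]
      have h0t : t ≠ 0 := fun h => hv (by rw [← ht.2, h, h0])
      have hmt : t ≠ m := fun h => hv (by rw [← ht.2, h, hm])
      exact ⟨⟨by omega, by omega⟩, ht.2⟩
    have hcard := Finset.card_le_card hsub
    have := hc v hv
    omega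

lemma one_sub_pmf (p : PMF V) (v : V) :
    (1 : ℝ≥0∞) - p v = ENNReal.ofReal (1 - (p v).toReal) := by
  rw [ENNReal.ofReal_sub _ ENNReal.toReal_nonneg, ENNReal.ofReal_one,
    ENNReal.ofReal_toReal (PMF.apply_ne_top p v)]

lemma prod_le_exp_neg_two {V : Type*} [Fintype V] [DecidableEq V] (p : PMF V)
    (T : Finset ℕ) (f : ℕ → V)
    (hcnt : ∀ v : V, 2 ≤ (T.filter (fun t => f t = v)).card) :
    ∏ t ∈ T, (1 - p (f t)) ≤ ENNReal.ofReal (Real.exp (-2)) := by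
  have htoReal_le : ∀ v : V, (p v).toReal ≤ 1 := by
    intro v
    have := PMF.coe_le_one p v
    calc (p v).toReal ≤ (1 : ℝ≥0∞).toReal :=
        ENNReal.toReal_mono (by simp) this
      _ = 1 := by simp
  have hnn : ∀ v : V, 0 ≤ 1 - (p v).toReal := fun v => by
    have := htoReal_le v; linarith
  have hprod : ∏ t ∈ T, (1 - p (f t))
      = ENNReal.ofReal (∏ t ∈ T, (1 - (p (f t)).toReal)) := by
    rw [ENNReal.ofReal_prod_of_nonneg (fun t _ => hnn (f t))]
    exact Finset.prod_congr rfl fun t _ => one_sub_pmf p (f t)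
  rw [hprod]
  refine ENNReal.ofReal_le_ofReal ?_
  have hsum_ge : (2 : ℝ) ≤ ∑ t ∈ T, (p (f t)).toReal := by
    have himg : ∀ v : V, v ∈ T.image f := by
      intro v
      have h2 := hcnt v
      have : (T.filter (fun t => f t = v)).Nonempty := Finset.card_pos.mp (by omega)
      obtain ⟨t, ht⟩ := this
      simp only [Finset.mem_filter] at ht
      exact Finset.mem_image.mpr ⟨t, ht.1, ht.2⟩
    have hcomp := Finset.sum_comp (fun v => (p v).toReal) f (s := T)
    have hext : ∑ v ∈ T.image f, (T.filter (fun t => f t = v)).card • (p v).toReal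
        = ∑ v ∈ Finset.univ, (T.filter (fun t => f t = v)).card • (p v).toReal := by
      refine Finset.sum_subset (Finset.subset_univ _) ?_
      intro v _ hv
      exact absurd (himg v) hv
    have hone : ∑ v ∈ Finset.univ, (p v).toReal = 1 := by
      have := PMF.tsum_coe p
      rw [tsum_fintype] at this
      have h2 : ((∑ v ∈ Finset.univ, p v)).toReal = (1 : ℝ≥0∞).toReal := by rw [this]
      rw [ENNReal.toReal_sum (fun v _ => PMF.apply_ne_top p v)] at h2
      simpa using h2
    calc (2 : ℝ) = ∑ v ∈ Finset.univ, 2 * (p v).toReal := by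
          rw [← Finset.mul_sum, hone, mul_one]
      _ ≤ ∑ v ∈ Finset.univ, (T.filter (fun t => f t = v)).card • (p v).toReal := by
          refine Finset.sum_le_sum fun v _ => ?_
          rw [nsmul_eq_mul]
          have h2 := hcnt v
          have hp0 : (0:ℝ) ≤ (p v).toReal := ENNReal.toReal_nonneg
          have : (2 : ℝ) ≤ ((T.filter (fun t => f t = v)).card : ℝ) := by exact_mod_cast h2
          nlinarith
      _ = ∑ t ∈ T, (p (f t)).toReal := by rw [hcomp, hext]
  calc ∏ t ∈ T, (1 - (p (f t)).toReal)
      ≤ ∏ t ∈ T, Real.exp (-(p (f t)).toReal) := by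
        refine Finset.prod_le_prod (fun t _ => hnn (f t)) fun t _ => ?_
        have := Real.add_one_le_exp (-(p (f t)).toReal)
        linarith
    _ = Real.exp (∑ t ∈ T, -(p (f t)).toReal) := (Real.exp_sum T _).symm
    _ ≤ Real.exp (-2) := by
        rw [Real.exp_le_exp]
        simp only [Finset.sum_neg_distrib]
        linarith


end CountSec

end CopGambler


/-- **Lemma 4.4 (cop vs. unknown gambler).**
On any connected graph on `n ≥ 2` vertices with any starting vertex `r`, there are
two cop walks starting at `r` (a repeated depth-first-search tour with a pause at each
leaf, run forward or backward) such that for every gamble `p`, the average of their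
expected capture times is at most `3n/(1 - e⁻²) - 3n/2`, which is less than `2n`. -/
theorem unknown_gambler_expected_capture_lt_two_card
    {V : Type*} [Fintype V] [MeasurableSpace V] [DiscreteMeasurableSpace V]
    {n : ℕ} (G : SimpleGraph V) (hG : G.Connected) (hn : Fintype.card V = n) (hn2 : 2 ≤ n)
    (r : V) :
    ∃ w₁ w₂ : ℕ → V,
      IsCopWalk G w₁ ∧ IsCopWalk G w₂ ∧ w₁ 0 = r ∧ w₂ 0 = r ∧
      (∀ p : PMF V,
        ∀ (Ω : Type*) (_ : MeasurableSpace Ω) (μ : Measure Ω), IsProbabilityMeasure μ →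
          ∀ X : ℕ → Ω → V, IsIIDWithLaw μ p X →
            ((∫⁻ ω, captureTime w₁ X ω ∂μ) + ∫⁻ ω, captureTime w₂ X ω ∂μ) / 2 ≤
              ENNReal.ofReal (3 * n / (1 - Real.exp (-2)) - 3 * n / 2)) ∧
      ENNReal.ofReal (3 * n / (1 - Real.exp (-2)) - 3 * n / 2) < 2 * (n : ℝ≥0∞) := by
  classical
  set x : ℝ := Real.exp (-2) with hxdef
  have hx0 : (0:ℝ) < x := Real.exp_pos _
  have hx17 : x < 1/7 := by
    have h7 : (7:ℝ) < Real.exp 2 := by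
      have he := Real.exp_one_gt_d9
      have h2 : Real.exp 2 = Real.exp 1 * Real.exp 1 := by
        rw [← Real.exp_add]; norm_num
      nlinarith
    rw [hxdef, Real.exp_neg]
    rw [show (1:ℝ)/7 = 7⁻¹ by norm_num]
    exact inv_strictAnti₀ (by norm_num) h7
  have hx1 : x < 1 := by linarith
  obtain ⟨l, hch, hhd, hlast, hlen0, hcr, hcS, hmemS⟩ := CopGambler.exists_tour G hG r
  set m : ℕ := 3 * n with hmdef
  have hm6 : 6 ≤ m := by omega
  have hmpos : 0 < m := by omega
  have hlen : l.length = m + 1 := by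
    rw [hlen0, Finset.card_univ, hn]
  set f : ℕ → V := fun i => l.getD i r with hfdef
  have hf0 : f 0 = r := by
    have h0 : l[0]? = some r := by rw [← List.head?_eq_getElem?]; exact hhd
    show l.getD 0 r = r
    rw [List.getD_eq_getElem?_getD, h0]; rfl
  have hfm : f m = r := by
    have h1 := List.getLast?_eq_getElem? (l := l)
    rw [hlen, Nat.add_sub_cancel] at h1
    have h0 : l[m]? = some r := by rw [← h1]; exact hlast
    show l.getD m r = r
    rw [List.getD_eq_getElem?_getD, h0]; rfl
  have hstep : ∀ i, i < m → CopGambler.Rel G (f i) (f (i + 1)) := by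
    intro i hi
    have h1 : i + 1 < l.length := by omega
    have h2 := List.isChain_iff_getElem.mp hch i (by omega)
    show CopGambler.Rel G (l.getD i r) (l.getD (i + 1) r)
    rw [List.getD_eq_getElem l r (by omega), List.getD_eq_getElem l r h1]
    simpa [List.get_eq_getElem] using h2
  set w₁ : ℕ → V := fun t => f (t % m) with hw1def
  set w₂ : ℕ → V := fun t => f (m - t % m) with hw2def
  have hsucc : ∀ t : ℕ, (t + 1) % m = (t % m + 1) % m := by
    intro t
    conv_lhs => rw [← Nat.div_add_mod t m]
    rw [Nat.add_assoc, Nat.mul_add_mod]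
  have hcop1 : IsCopWalk G w₁ := by
    intro t
    have hi : t % m < m := Nat.mod_lt _ hmpos
    have hrel : CopGambler.Rel G (w₁ t) (w₁ (t + 1)) := by
      show CopGambler.Rel G (f (t % m)) (f ((t + 1) % m))
      rw [hsucc t]
      by_cases hcase : t % m + 1 = m
      · have h := hstep _ hi
        rw [hcase, hfm, ← hf0] at h
        rw [hcase, Nat.mod_self]
        exact h
      · rw [Nat.mod_eq_of_lt (show t % m + 1 < m by omega)]
        exact hstep _ hi
    exact hrel
  have hcop2 : IsCopWalk G w₂ := by
    intro t
    have hi : t % m < m := Nat.mod_lt _ hmpos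
    have hrel : CopGambler.Rel G (w₂ t) (w₂ (t + 1)) := by
      show CopGambler.Rel G (f (m - t % m)) (f (m - (t + 1) % m))
      rw [hsucc t]
      by_cases hcase : t % m + 1 = m
      · rw [hcase, Nat.mod_self, Nat.sub_zero]
        have h1 : m - t % m = 1 := by omega
        rw [h1]
        have h := hstep 0 hmpos
        simp only [Nat.zero_add] at h
        have h' := CopGambler.rel_symm G h
        rw [hf0, ← hfm] at h'
        exact h'
      · have hlt : t % m + 1 < m := by omega
        rw [Nat.mod_eq_of_lt hlt]
        have h := hstep (m - t % m - 1) (by omega)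
        have he : m - t % m - 1 + 1 = m - t % m := by omega
        rw [he] at h
        have h' := CopGambler.rel_symm G h
        have he2 : m - (t % m + 1) = m - t % m - 1 := by omega
        rw [he2]
        exact h'
    exact hrel
  have hw10 : w₁ 0 = r := by
    show f (0 % m) = r
    rw [Nat.zero_mod]; exact hf0
  have hw20 : w₂ 0 = r := by
    show f (m - 0 % m) = r
    rw [Nat.zero_mod, Nat.sub_zero]; exact hfm
  have hc' : ∀ v, v ≠ r → 2 ≤ l.count v := fun v _ => hcS v (Finset.mem_univ v)
  refine ⟨w₁, w₂, hcop1, hcop2, hw10, hw20, ?_, ?_⟩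
  · intro p Ω mΩ μ hprob X hX
    haveI := hprob
    have hIcc : ∀ t : ℕ, Finset.Icc 1 t = Finset.Ioc 0 t := fun t => Finset.Icc_add_one_left_eq_Ioc 0 t
    have hE1 : ∫⁻ ω, captureTime w₁ X ω ∂μ
        ≤ (∑ u ∈ Finset.range m, ∏ s ∈ Finset.Ioc 0 u, (1 - p (w₁ s)))
          * (1 - ∏ s ∈ Finset.Ioc 0 m, (1 - p (w₁ s)))⁻¹ := by
      refine (CopGambler.lintegral_captureTime_le hX w₁).trans (le_of_eq ?_)
      simp only [hIcc]
      refine CopGambler.tsum_periodic m (by omega) _ (fun s => ?_)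
      show (1:ℝ≥0∞) - p (f ((s + m) % m)) = 1 - p (f (s % m))
      rw [Nat.add_mod_right]
    have hE2 : ∫⁻ ω, captureTime w₂ X ω ∂μ
        ≤ (∑ u ∈ Finset.range m, ∏ s ∈ Finset.Ioc 0 u, (1 - p (w₂ s)))
          * (1 - ∏ s ∈ Finset.Ioc 0 m, (1 - p (w₂ s)))⁻¹ := by
      refine (CopGambler.lintegral_captureTime_le hX w₂).trans (le_of_eq ?_)
      simp only [hIcc]
      refine CopGambler.tsum_periodic m (by omega) _ (fun s => ?_)
      show (1:ℝ≥0∞) - p (f (m - (s + m) % m)) = 1 - p (f (m - s % m))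
      rw [Nat.add_mod_right]
    have hq1 : ∏ s ∈ Finset.Ioc 0 m, (1 - p (w₁ s))
        = ∏ t ∈ Finset.range m, (1 - p (f t)) := by
      refine Finset.prod_nbij' (fun s => s % m) (fun t => if t = 0 then m else t)
        ?_ ?_ ?_ ?_ ?_
      · intro a ha
        simp only [Finset.mem_range]
        exact Nat.mod_lt _ hmpos
      · intro a ha
        simp only [Finset.mem_range] at ha
        simp only [Finset.mem_Ioc]
        split_ifs with h <;> omega
      · intro a ha
        simp only [Finset.mem_Ioc] at ha
        rcases eq_or_lt_of_le ha.2 with rfl | hlt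
        · rw [Nat.mod_self]; simp
        · rw [Nat.mod_eq_of_lt hlt, if_neg (by omega)]
      · intro a ha
        simp only [Finset.mem_range] at ha
        split_ifs with h
        · rw [h, Nat.mod_self]
        · exact Nat.mod_eq_of_lt ha
      · intro a ha
        rfl
    have hq2 : ∏ s ∈ Finset.Ioc 0 m, (1 - p (w₂ s))
        = ∏ t ∈ Finset.range m, (1 - p (f t)) := by
      refine Finset.prod_nbij' (fun s => (m - s % m) % m)
        (fun t => if t = 0 then m else m - t) ?_ ?_ ?_ ?_ ?_
      · intro a ha
        simp only [Finset.mem_range]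
        exact Nat.mod_lt _ hmpos
      · intro a ha
        simp only [Finset.mem_range] at ha
        simp only [Finset.mem_Ioc]
        split_ifs with h <;> omega
      · intro a ha
        simp only [Finset.mem_Ioc] at ha
        rcases eq_or_lt_of_le ha.2 with rfl | hlt
        · rw [Nat.mod_self, Nat.sub_zero, Nat.mod_self]; simp
        · rw [Nat.mod_eq_of_lt hlt, Nat.mod_eq_of_lt (show m - a < m by omega),
            if_neg (by omega)]
          omega
      · intro a ha
        simp only [Finset.mem_range] at ha
        split_ifs with h
        · rw [h, Nat.mod_self, Nat.sub_zero, Nat.mod_self]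
        · rw [Nat.mod_eq_of_lt (show m - a < m by omega),
            Nat.mod_eq_of_lt (show m - (m - a) < m by omega)]
          omega
      · intro a ha
        simp only [Finset.mem_Ioc] at ha
        show (1:ℝ≥0∞) - p (f (m - a % m)) = 1 - p (f ((m - a % m) % m))
        rcases eq_or_lt_of_le ha.2 with rfl | hlt
        · rw [Nat.mod_self, Nat.sub_zero, Nat.mod_self, hfm, hf0]
        · rw [Nat.mod_eq_of_lt hlt, Nat.mod_eq_of_lt (show m - a < m by omega)]
    have hs1 : ∑ u ∈ Finset.range m, ∏ s ∈ Finset.Ioc 0 u, (1 - p (w₁ s))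
        = ∑ u ∈ Finset.range m, ∏ s ∈ Finset.Ioc 0 u, (1 - p (f s)) := by
      refine Finset.sum_congr rfl fun u hu => Finset.prod_congr rfl fun s hs => ?_
      simp only [Finset.mem_range] at hu
      simp only [Finset.mem_Ioc] at hs
      show (1:ℝ≥0∞) - p (f (s % m)) = 1 - p (f s)
      rw [Nat.mod_eq_of_lt (show s < m by omega)]
    have hs2 : ∑ u ∈ Finset.range m, ∏ s ∈ Finset.Ioc 0 u, (1 - p (w₂ s))
        = ∑ u ∈ Finset.range m, ∏ s ∈ Finset.Ioc 0 u, (1 - p (f (m - s))) := by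
      refine Finset.sum_congr rfl fun u hu => Finset.prod_congr rfl fun s hs => ?_
      simp only [Finset.mem_range] at hu
      simp only [Finset.mem_Ioc] at hs
      show (1:ℝ≥0∞) - p (f (m - s % m)) = 1 - p (f (m - s))
      rw [Nat.mod_eq_of_lt (show s < m by omega)]
    have hpair := CopGambler.pairing_bound m (by omega) (fun t => 1 - p (f t))
      (fun t => tsub_le_self)
    have hQρ : ∏ s ∈ Finset.Ioc 0 (m - 1), (1 - p (f s)) ≤ ENNReal.ofReal x := by
      rw [hxdef]
      refine le_trans (le_of_eq ?_)
        (CopGambler.prod_le_exp_neg_two p (Finset.Icc 1 (m - 1)) f (fun v => ?_))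
      · rw [hIcc]
      · exact CopGambler.tour_filter_card l r m (by omega) hlen hf0 hfm hcr hc' v
    have hQfQ : ∏ t ∈ Finset.range m, (1 - p (f t))
        ≤ ∏ s ∈ Finset.Ioc 0 (m - 1), (1 - p (f s)) := by
      have hins : Finset.range m = insert 0 (Finset.Ioc 0 (m - 1)) := by
        ext t
        simp only [Finset.mem_range, Finset.mem_insert, Finset.mem_Ioc]
        omega
      rw [hins, Finset.prod_insert (by simp)]
      calc (1 - p (f 0)) * ∏ s ∈ Finset.Ioc 0 (m - 1), (1 - p (f s))
          ≤ 1 * ∏ s ∈ Finset.Ioc 0 (m - 1), (1 - p (f s)) :=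
            mul_le_mul_left tsub_le_self _
        _ = _ := one_mul _
    have hQfρ : ∏ t ∈ Finset.range m, (1 - p (f t)) ≤ ENNReal.ofReal x :=
      hQfQ.trans hQρ
    rw [hq1, hs1] at hE1
    rw [hq2, hs2] at hE2
    have htotal : (∫⁻ ω, captureTime w₁ X ω ∂μ) + ∫⁻ ω, captureTime w₂ X ω ∂μ
        ≤ ((∑ u ∈ Finset.range m, ∏ s ∈ Finset.Ioc 0 u, (1 - p (f s)))
            + ∑ u ∈ Finset.range m, ∏ s ∈ Finset.Ioc 0 u, (1 - p (f (m - s))))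
          * (1 - ∏ t ∈ Finset.range m, (1 - p (f t)))⁻¹ := by
      rw [add_mul]
      exact add_le_add hE1 hE2
    have hstep3 : ((∑ u ∈ Finset.range m, ∏ s ∈ Finset.Ioc 0 u, (1 - p (f s)))
            + ∑ u ∈ Finset.range m, ∏ s ∈ Finset.Ioc 0 u, (1 - p (f (m - s))))
          * (1 - ∏ t ∈ Finset.range m, (1 - p (f t)))⁻¹
        ≤ ((m : ℝ≥0∞) * (1 + ENNReal.ofReal x)) * (1 - ENNReal.ofReal x)⁻¹ := by
      refine mul_le_mul' (hpair.trans ?_) (ENNReal.inv_le_inv.mpr ?_)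
      · exact mul_le_mul_right (add_le_add_right hQρ 1) _
      · exact tsub_le_tsub_left hQfρ 1
    have h1x : (0:ℝ) < 1 - x := by linarith
    have hCpos : (0:ℝ) ≤ 3 * n / (1 - x) - 3 * n / 2 := by
      have hn' : (2:ℝ) ≤ (n : ℝ) := by exact_mod_cast hn2
      have hd2 : 3 * (n:ℝ) / 2 ≤ 3 * n / (1 - x) := by
        apply div_le_div_of_nonneg_left (by linarith) h1x (by linarith)
      linarith
    have hconv : ((m : ℝ≥0∞) * (1 + ENNReal.ofReal x)) * (1 - ENNReal.ofReal x)⁻¹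
        = ENNReal.ofReal (3 * n / (1 - x) - 3 * n / 2) * 2 := by
      have hone : ENNReal.ofReal (1 - x) = 1 - ENNReal.ofReal x := by
        rw [ENNReal.ofReal_sub 1 hx0.le, ENNReal.ofReal_one]
      have hadd : ENNReal.ofReal (1 + x) = 1 + ENNReal.ofReal x := by
        rw [ENNReal.ofReal_add zero_le_one hx0.le, ENNReal.ofReal_one]
      have hm' : (m : ℝ≥0∞) = ENNReal.ofReal (m : ℝ) := by
        rw [ENNReal.ofReal_natCast]
      have h2' : (2 : ℝ≥0∞) = ENNReal.ofReal (2 : ℝ) := by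
        rw [ENNReal.ofReal_ofNat]
      rw [hm', ← hadd, ← hone, ← ENNReal.ofReal_inv_of_pos h1x, h2',
        ← ENNReal.ofReal_mul (by positivity), ← ENNReal.ofReal_mul (by positivity),
        ← ENNReal.ofReal_mul (by positivity)]
      congr 1
      have hmr : (m:ℝ) = 3 * n := by rw [hmdef]; push_cast; ring
      rw [hmr]
      field_simp
      ring
    rw [ENNReal.div_le_iff_le_mul (Or.inl two_ne_zero) (Or.inl (by norm_num))]
    calc (∫⁻ ω, captureTime w₁ X ω ∂μ) + ∫⁻ ω, captureTime w₂ X ω ∂μ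
        ≤ ((m : ℝ≥0∞) * (1 + ENNReal.ofReal x)) * (1 - ENNReal.ofReal x)⁻¹ :=
          htotal.trans hstep3
      _ = ENNReal.ofReal (3 * n / (1 - x) - 3 * n / 2) * 2 := hconv
  · have h1x : (0:ℝ) < 1 - x := by linarith
    have hn' : (2:ℝ) ≤ (n : ℝ) := by exact_mod_cast hn2
    have hC : 3 * (n:ℝ) / (1 - x) - 3 * n / 2 < 2 * n := by
      have key : 3 * (n:ℝ) / (1 - x) < 7 * n / 2 := by
        rw [div_lt_div_iff₀ h1x (by norm_num : (0:ℝ) < 2)]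
        nlinarith
      linarith
    have h2n0 : (0:ℝ) < 2 * n := by linarith
    calc ENNReal.ofReal (3 * n / (1 - x) - 3 * n / 2)
        < ENNReal.ofReal (2 * n) := (ENNReal.ofReal_lt_ofReal_iff h2n0).mpr hC
      _ = 2 * (n : ℝ≥0∞) := by
          rw [ENNReal.ofReal_mul (by norm_num : (0:ℝ) ≤ 2)]
          rw [ENNReal.ofReal_ofNat, ENNReal.ofReal_natCast]
end

section
/- Let T be a tree on n ≥ 2 vertices and let r be any vertex of T. Then there exists a closed cop walk w : {0, 1, …, L} → V(T) on T with w(0) = w(L) = r and L ≤ 3n − 2 (each consecutive pair of positions equal or adjacent) such that every vertex of T occurs at least twice among the positions w(1), w(2), …, w(L). (The depth-first-search tour with a pause at each leaf used in Lemma 4.4: it has length at most 3n − 2 and visits every vertex at least twice.) -/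
open SimpleGraph Finset

private lemma adj_of_walk_pair {V : Type*} [DecidableEq V] {T : SimpleGraph V} {r p : V}
    (hrp : r ≠ p) (W : T.Walk r p) (hsupp : ∀ x ∈ W.support, x ∈ ({r, p} : Finset V)) :
    T.Adj r p := by
  cases W with
  | nil => exact absurd rfl hrp
  | cons h q =>
    rename_i x
    have hx : x ∈ ({r, p} : Finset V) := by
      apply hsupp
      simp [SimpleGraph.Walk.support_cons]
    have hxr : x ≠ r := fun he => T.irrefl (he ▸ h)
    have : x = p := by
      rcases Finset.mem_insert.mp hx with h1 | h1
      · exact absurd h1 hxr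
      · simpa using h1
    exact this ▸ h

private lemma key_tour {V : Type*} [Fintype V] [DecidableEq V] (T : SimpleGraph V) :
    ∀ m : ℕ, ∀ (S : Finset V) (r : V), r ∈ S → S.card = m → 2 ≤ m →
    (∀ u ∈ S, ∃ p : T.Walk r u, ∀ x ∈ p.support, x ∈ S) →
    ∃ (L : ℕ) (w : ℕ → V), L ≤ 3 * m - 2 ∧ w 0 = r ∧ w L = r ∧
      (∀ t : ℕ, t < L → w (t + 1) = w t ∨ T.Adj (w t) (w (t + 1))) ∧
      ∀ v ∈ S, 2 ≤ ((Finset.Icc 1 L).filter (fun t => w t = v)).card := by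
  intro m
  induction m using Nat.strong_induction_on with
  | _ m IH =>
  intro S r hrS hcard hm hConn
  rcases eq_or_lt_of_le hm with hm2 | hm3
  · -- base case m = 2
    obtain ⟨a, b, hab, hS⟩ := Finset.card_eq_two.mp (hcard ▸ hm2.symm)
    have hr : r = a ∨ r = b := by
      have := hrS; rw [hS] at this; simpa using this
    -- let p be the other vertex
    obtain ⟨p, hrp, hSrp⟩ : ∃ p, r ≠ p ∧ S = {r, p} := by
      rcases hr with h | h
      · exact ⟨b, h ▸ hab, by rw [hS, h]⟩
      · exact ⟨a, h ▸ hab.symm, by rw [hS, h, Finset.pair_comm]⟩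
    have hpS : p ∈ S := by rw [hSrp]; simp
    obtain ⟨W, hW⟩ := hConn p hpS
    have hadj : T.Adj r p := adj_of_walk_pair hrp W (fun x hx => hSrp ▸ hW x hx)
    refine ⟨4, fun t => if t = 1 ∨ t = 2 then p else r, by omega, by norm_num, by norm_num,
      ?_, ?_⟩
    · intro t ht
      interval_cases t <;> simp [hadj, hadj.symm]
    · intro v hv
      rw [hSrp] at hv
      rcases Finset.mem_insert.mp hv with h | h
      · subst h
        have hsub : ({3, 4} : Finset ℕ) ⊆ (Finset.Icc 1 4).filter
            (fun t => (if t = 1 ∨ t = 2 then p else v) = v) := by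
          intro t ht
          fin_cases ht <;> simp
        calc 2 = ({3, 4} : Finset ℕ).card := by decide
          _ ≤ _ := Finset.card_le_card hsub
      · have h : v = p := by simpa using h
        subst h
        have hsub : ({1, 2} : Finset ℕ) ⊆ (Finset.Icc 1 4).filter
            (fun t => (if t = 1 ∨ t = 2 then v else r) = v) := by
          intro t ht
          fin_cases ht <;> simp
        calc 2 = ({1, 2} : Finset ℕ).card := by decide
          _ ≤ _ := Finset.card_le_card hsub
  · -- inductive step m ≥ 3
    -- distance within S
    set P : V → Set ℕ := fun u => {k | ∃ p : T.Walk r u, p.length = k ∧ ∀ x ∈ p.support, x ∈ S}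
      with hP
    set d : V → ℕ := fun u => sInf (P u) with hd
    have hPne : ∀ u ∈ S, (P u).Nonempty := by
      intro u hu
      obtain ⟨p, hp⟩ := hConn u hu
      exact ⟨p.length, p, rfl, hp⟩
    have hdspec : ∀ u ∈ S, ∃ p : T.Walk r u, p.length = d u ∧ ∀ x ∈ p.support, x ∈ S :=
      fun u hu => Nat.sInf_mem (hPne u hu)
    have hdle : ∀ u (p : T.Walk r u), (∀ x ∈ p.support, x ∈ S) → d u ≤ p.length := by
      intro u p hp
      exact Nat.sInf_le ⟨p, rfl, hp⟩
    -- choose farthest vertex ℓ ≠ r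
    have herne : (S.erase r).Nonempty := by
      rw [← Finset.card_pos, Finset.card_erase_of_mem hrS]; omega
    obtain ⟨ℓ, hℓmem, hmax⟩ := Finset.exists_max_image (S.erase r) d herne
    have hℓS : ℓ ∈ S := Finset.mem_of_mem_erase hℓmem
    have hℓr : ℓ ≠ r := Finset.ne_of_mem_erase hℓmem
    obtain ⟨W, hWlen, hWsupp⟩ := hdspec ℓ hℓS
    have hdℓ1 : 1 ≤ d ℓ := by
      rcases Nat.eq_zero_or_pos (d ℓ) with h | h
      · exact absurd (SimpleGraph.Walk.eq_of_length_eq_zero (hWlen.trans h)).symm hℓr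
      · exact h
    -- penultimate vertex p
    obtain ⟨p, hadjℓp, hpS, hpd⟩ : ∃ p, T.Adj ℓ p ∧ p ∈ S ∧ d p ≤ d ℓ - 1 := by
      cases hW' : W.reverse with
      | nil =>
        exfalso
        have : W.length = 0 := by
          have := congrArg SimpleGraph.Walk.length hW'
          rw [SimpleGraph.Walk.length_reverse] at this
          simpa using this
        omega
      | cons h q =>
        rename_i x
        refine ⟨x, h, ?_, ?_⟩
        · have : x ∈ W.reverse.support := by rw [hW']; simp [SimpleGraph.Walk.support_cons,
            SimpleGraph.Walk.start_mem_support]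
          rw [SimpleGraph.Walk.support_reverse] at this
          exact hWsupp x (List.mem_reverse.mp this)
        · have hq : ∀ y ∈ q.reverse.support, y ∈ S := by
            intro y hy
            rw [SimpleGraph.Walk.support_reverse] at hy
            have : y ∈ W.reverse.support := by
              rw [hW', SimpleGraph.Walk.support_cons]
              exact List.mem_cons_of_mem _ (List.mem_reverse.mp hy)
            rw [SimpleGraph.Walk.support_reverse] at this
            exact hWsupp y (List.mem_reverse.mp this)
          have hlen : q.reverse.length = d ℓ - 1 := by
            have h1 : W.reverse.length = q.length + 1 := by rw [hW']; simp
            rw [SimpleGraph.Walk.length_reverse] at h1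
            rw [SimpleGraph.Walk.length_reverse]
            omega
          exact hlen ▸ hdle x q.reverse hq
    have hpℓ : p ≠ ℓ := by
      intro he
      have := hpd
      rw [he] at this
      omega
    -- S.erase ℓ is connected from r
    have hrS' : r ∈ S.erase ℓ := Finset.mem_erase.mpr ⟨hℓr.symm, hrS⟩
    have hConn' : ∀ u ∈ S.erase ℓ, ∃ q : T.Walk r u, ∀ x ∈ q.support, x ∈ S.erase ℓ := by
      intro u hu
      have huℓ : u ≠ ℓ := Finset.ne_of_mem_erase hu
      have huS : u ∈ S := Finset.mem_of_mem_erase hu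
      by_cases hur : u = r
      · subst hur
        exact ⟨SimpleGraph.Walk.nil, by intro x hx; simp at hx; exact hx ▸ hrS'⟩
      obtain ⟨Wu, hWulen, hWusupp⟩ := hdspec u huS
      have hℓnot : ℓ ∉ Wu.support := by
        intro hmem
        have h1 : d ℓ ≤ (Wu.takeUntil ℓ hmem).length :=
          hdle ℓ _ (fun x hx => hWusupp x (SimpleGraph.Walk.support_takeUntil_subset Wu hmem hx))
        have h2 : (Wu.takeUntil ℓ hmem).length + (Wu.dropUntil ℓ hmem).length = Wu.length := by
          rw [← SimpleGraph.Walk.length_append, SimpleGraph.Walk.take_spec]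
        have h3 : d u ≤ d ℓ := hmax u (Finset.mem_erase.mpr ⟨hur, huS⟩)
        have h4 : (Wu.dropUntil ℓ hmem).length = 0 := by omega
        exact huℓ (SimpleGraph.Walk.eq_of_length_eq_zero h4).symm
      exact ⟨Wu, fun x hx => Finset.mem_erase.mpr ⟨fun he => hℓnot (he ▸ hx), hWusupp x hx⟩⟩
    -- apply IH
    have hcard' : (S.erase ℓ).card = m - 1 := by
      rw [Finset.card_erase_of_mem hℓS, hcard]
    obtain ⟨L', w', hL', hw0, hwL, hstep, hcover⟩ :=
      IH (m - 1) (by omega) (S.erase ℓ) r hrS' hcard' (by omega) hConn'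
    have hpS' : p ∈ S.erase ℓ := Finset.mem_erase.mpr ⟨hpℓ, hpS⟩
    -- find t₀ with w' t₀ = p
    have hpcount := hcover p hpS'
    obtain ⟨t₀, ht₀⟩ := Finset.card_pos.mp (by omega :
      0 < ((Finset.Icc 1 L').filter (fun t => w' t = p)).card)
    rw [Finset.mem_filter, Finset.mem_Icc] at ht₀
    obtain ⟨⟨ht₀1, ht₀L⟩, hwt₀⟩ := ht₀
    -- construct new walk
    set w : ℕ → V := fun t => if t ≤ t₀ then w' t else if t ≤ t₀ + 2 then ℓ else w' (t - 3)
      with hw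
    refine ⟨L' + 3, w, by omega, ?_, ?_, ?_, ?_⟩
    · simp only [hw]; rw [if_pos (by omega)]; exact hw0
    · simp only [hw]
      rw [if_neg (by omega), if_neg (by omega)]
      simpa using hwL
    · intro t ht
      rcases lt_trichotomy t t₀ with h1 | h1 | h1
      · have e1 : w t = w' t := by simp only [hw]; rw [if_pos (by omega)]
        have e2 : w (t + 1) = w' (t + 1) := by simp only [hw]; rw [if_pos (by omega)]
        rw [e1, e2]
        exact hstep t (by omega)
      · have e1 : w t = p := by
          simp only [hw]; rw [if_pos (by omega), h1]; exact hwt₀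
        have e2 : w (t + 1) = ℓ := by simp only [hw]; rw [if_neg (by omega), if_pos (by omega)]
        rw [e1, e2]
        exact Or.inr hadjℓp.symm
      · rcases lt_trichotomy t (t₀ + 2) with h2 | h2 | h2
        · have ht1 : t = t₀ + 1 := by omega
          have e1 : w t = ℓ := by simp only [hw]; rw [if_neg (by omega), if_pos (by omega)]
          have e2 : w (t + 1) = ℓ := by simp only [hw]; rw [if_neg (by omega), if_pos (by omega)]
          rw [e1, e2]; exact Or.inl rfl
        · have e1 : w t = ℓ := by simp only [hw]; rw [if_neg (by omega), if_pos (by omega)]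
          have e2 : w (t + 1) = p := by
            simp only [hw]; rw [if_neg (by omega), if_neg (by omega)]
            have : t + 1 - 3 = t₀ := by omega
            rw [this]; exact hwt₀
          rw [e1, e2]; exact Or.inr hadjℓp
        · have e1 : w t = w' (t - 3) := by simp only [hw]; rw [if_neg (by omega), if_neg (by omega)]
          have e2 : w (t + 1) = w' (t - 3 + 1) := by
            simp only [hw]; rw [if_neg (by omega), if_neg (by omega)]
            congr 1; omega
          rw [e1, e2]
          exact hstep (t - 3) (by omega)
    · intro v hv
      by_cases hvℓ : v = ℓ
      · subst hvℓ
        have hsub : ({t₀ + 1, t₀ + 2} : Finset ℕ) ⊆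
            (Finset.Icc 1 (L' + 3)).filter (fun t => w t = v) := by
          intro t ht
          simp only [Finset.mem_insert, Finset.mem_singleton] at ht
          rw [Finset.mem_filter, Finset.mem_Icc]
          rcases ht with h | h <;> subst h <;>
            simp only [hw] <;>
            refine ⟨⟨by omega, by omega⟩, ?_⟩ <;>
            rw [if_neg (by omega), if_pos (by omega)]
        calc 2 = ({t₀ + 1, t₀ + 2} : Finset ℕ).card := by
              rw [Finset.card_insert_of_notMem (by simp), Finset.card_singleton]
          _ ≤ _ := Finset.card_le_card hsub
      · have hv' : v ∈ S.erase ℓ := Finset.mem_erase.mpr ⟨hvℓ, hv⟩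
        have hold := hcover v hv'
        have hle : ((Finset.Icc 1 L').filter (fun t => w' t = v)).card ≤
            ((Finset.Icc 1 (L' + 3)).filter (fun t => w t = v)).card := by
          apply Finset.card_le_card_of_injOn (fun t => if t ≤ t₀ then t else t + 3)
          · intro a ha
            rw [Finset.mem_coe, Finset.mem_filter, Finset.mem_Icc] at ha ⊢
            beta_reduce
            obtain ⟨⟨ha1, ha2⟩, hav⟩ := ha
            by_cases hat : a ≤ t₀
            · rw [if_pos hat]
              refine ⟨⟨ha1, by omega⟩, ?_⟩
              simp only [hw]; rw [if_pos hat]; exact hav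
            · rw [if_neg hat]
              refine ⟨⟨by omega, by omega⟩, ?_⟩
              simp only [hw]; rw [if_neg (by omega), if_neg (by omega)]
              have : a + 3 - 3 = a := by omega
              rw [this]; exact hav
          · intro a _ b _ hab
            simp only at hab
            split_ifs at hab <;> omega
        omega


/-- **The depth-first-search tour used in Lemma 4.4.**
On a tree on `n ≥ 2` vertices with any root `r`, there is a closed cop walk of some
length `L ≤ 3n - 2` starting and ending at `r` (each consecutive pair of positions is
equal or adjacent) that visits every vertex at least twice among the positions at times
`1, …, L`. -/
theorem tree_exists_dfs_tour_visiting_twice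
    {V : Type*} [Fintype V] [DecidableEq V] {n : ℕ} (T : SimpleGraph V) (hT : T.IsTree)
    (hn : Fintype.card V = n) (hn2 : 2 ≤ n) (r : V) :
    ∃ (L : ℕ) (w : ℕ → V), L ≤ 3 * n - 2 ∧ w 0 = r ∧ w L = r ∧
      (∀ t : ℕ, t < L → w (t + 1) = w t ∨ T.Adj (w t) (w (t + 1))) ∧
      ∀ v : V, 2 ≤ ((Finset.Icc 1 L).filter (fun t => w t = v)).card := by
  have hConn : ∀ u ∈ (Finset.univ : Finset V), ∃ p : T.Walk r u,
      ∀ x ∈ p.support, x ∈ (Finset.univ : Finset V) := by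
    intro u _
    obtain ⟨p⟩ := hT.isConnected.preconnected r u
    exact ⟨p, fun x _ => Finset.mem_univ x⟩
  obtain ⟨L, w, h1, h2, h3, h4, h5⟩ := key_tour T n Finset.univ r (Finset.mem_univ r)
    (by rw [Finset.card_univ, hn]) hn2 hConn
  exact ⟨L, w, h1, h2, h3, h4, fun v => h5 v (Finset.mem_univ v)⟩
end
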